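/- For every finite H ⊆ [p]^m and every i ∈ [m], the shifting average k-degree does not decrease under shifting: savd(S_i(H)) ≥ savd(H), where savd(G) = (1/|G|) ∑_{e edge of G(G)} max(|e| - k, 0). -/

import Mathlib

/-- The edge of the one-inclusion graph of `G ⊆ [p]^m` in direction `j` through `v`. -/
def edge {m p : ℕ} (G : Finset (Fin m → Fin p)) (j : Fin m) (v : Fin m → Fin p) :
    Finset (Fin m → Fin p) :=
  G.filter fun g => ∀ l, l ≠ j → g l = v l

/-- The shifting operator in direction `i`. -/
def shift {m p : ℕ} (i : Fin m) (H : Finset (Fin m → Fin p)) :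
    Finset (Fin m → Fin p) :=
  Finset.univ.filter fun g =>
    (g i : ℕ) < (H.filter fun h => ∀ j, j ≠ i → h j = g j).card

/-!
Since `#e - k = #e - min #e k` and the edges in each direction partition `G`, the numerator
in direction `j` is `#G - ∑ₑ min #e k`, and shifting preserves `#G`; so it suffices that shifting
does not increase `∑ₑ min #e k`. In direction `i` shifting preserves every edge size. For `j ≠ i`
the question splits over the planes spanned by the coordinates `i` and `j`: there the `j`-edges
are the rows, and shifting replaces each column by an initial segment of the same size. After
this compression row `a` consists of the columns of size `> a`, so `∑ₐ min #rowₐ k` becomes the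
total size of the `k` largest columns, which is at most `∑ₐ min #rowₐ k` before compression.
-/

open Finset Function

theorem exists_subset_card_eq_forall_le {α β : Type*} [DecidableEq α] [LinearOrder β]
    (f : α → β) {n : ℕ} {s : Finset α} (hn : n ≤ #s) :
    ∃ t ⊆ s, #t = n ∧ ∀ x ∈ s, x ∉ t → ∀ y ∈ t, f x ≤ f y := by
  induction n generalizing s with
  | zero => exact ⟨∅, empty_subset s, rfl, by simp⟩
  | succ n ih =>
    obtain ⟨y, hy, hymax⟩ := exists_max_image s f (card_pos.mp (by omega))
    obtain ⟨t, hts, htn, htop⟩ := ih (s := s.erase y) (by rw [card_erase_of_mem hy]; omega)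
    have hyt : y ∉ t := fun h => (mem_erase.mp (hts h)).1 rfl
    refine ⟨insert y t, insert_subset hy (hts.trans (erase_subset y s)), by
      rw [card_insert_of_notMem hyt, htn], fun x hx hxt z hz => ?_⟩
    obtain rfl | hz := mem_insert.mp hz
    · exact hymax x hx
    · exact htop x (mem_erase.mpr ⟨fun h => hxt (h ▸ mem_insert_self x t), hx⟩)
        (fun h => hxt (mem_insert_of_mem h)) z hz

section Compression

variable {β : Type*} [Fintype β] [DecidableEq β]

theorem min_card_filter_lt_le_card_filter (c : β → ℕ) {B : Finset β} {k : ℕ}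
    (hB : #B = min k (Fintype.card β)) (htop : ∀ x, x ∉ B → ∀ y ∈ B, c x ≤ c y) (a : ℕ) :
    min #{b | a < c b} k ≤ #{b ∈ B | a < c b} := by
  by_cases hsub : ∀ b, a < c b → b ∈ B
  · refine (min_le_left _ _).trans (card_le_card fun b hb => ?_)
    have hb := (mem_filter.mp hb).2
    exact mem_filter.mpr ⟨hsub b hb, hb⟩
  · obtain ⟨b₀, hab₀, hb₀⟩ := not_forall₂.mp hsub
    rw [filter_true_of_mem fun y hy => hab₀.trans_le (htop b₀ hb₀ y hy), hB, min_comm]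
    exact min_le_min_left k (card_le_univ _)

theorem sum_min_card_compress_le {p : ℕ} (R : Fin p → Finset β) (k : ℕ) :
    ∑ a : Fin p, min #{b | (a : ℕ) < #{a' | b ∈ R a'}} k ≤ ∑ a, min #(R a) k := by
  set c : β → ℕ := fun b => #{a' | b ∈ R a'}
  -- `B` is a set of `min k |β|` columns of largest size.
  obtain ⟨B, -, hB, htop⟩ := exists_subset_card_eq_forall_le c
    (s := univ) (min_le_right k (Fintype.card β))
  calc ∑ a : Fin p, min #{b | (a : ℕ) < c b} k
      ≤ ∑ a : Fin p, #{b ∈ B | (a : ℕ) < c b} :=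
        sum_le_sum fun a _ => min_card_filter_lt_le_card_filter c hB
          (fun x hx => htop x (mem_univ x) hx) a
    _ = ∑ b ∈ B, #{a : Fin p | (a : ℕ) < c b} := by simp only [card_filter]; exact sum_comm
    _ = ∑ b ∈ B, c b := sum_congr rfl fun b _ => by
        rw [Fin.card_filter_val_lt, min_eq_right (card_le_univ _ |>.trans (Fintype.card_fin p).le)]
    _ = ∑ a, #(R a ∩ B) := by
        simp only [c, card_filter, inter_comm _ B, ← filter_mem_eq_inter]; exact sum_comm
    _ ≤ ∑ a, min #(R a) k := sum_le_sum fun a _ =>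
        le_min (card_le_card inter_subset_left)
          ((card_le_card inter_subset_right).trans (hB ▸ min_le_left _ _))

end Compression

theorem sum_image_filter_eq_sum_image {α β γ : Type*} [DecidableEq α] [DecidableEq β]
    [AddCommMonoid γ] (s : Finset α) (f : α → β) (φ : Finset α → γ) :
    ∑ e ∈ s.image (fun x => {y ∈ s | f y = f x}), φ e = ∑ b ∈ s.image f, φ {y ∈ s | f y = b} := by
  rw [show s.image (fun x => {y ∈ s | f y = f x}) = (s.image f).image fun b => {y ∈ s | f y = b}
    by rw [image_image]; rfl, sum_image]
  intro b hb b' _ hbb'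
  obtain ⟨x, hx, rfl⟩ := mem_image.mp hb
  simpa [hx] using Finset.ext_iff.mp hbb' x

section OneInclusion

variable {m p : ℕ}

theorem mem_shift {i : Fin m} {H : Finset (Fin m → Fin p)} {g : Fin m → Fin p} :
    g ∈ shift i H ↔ (g i : ℕ) < #(edge H i g) := by
  simp [shift, edge]

theorem edge_update (G : Finset (Fin m → Fin p)) (j : Fin m) (g : Fin m → Fin p) (b : Fin p) :
    edge G j (update g j b) = edge G j g :=
  filter_congr fun h _ => forall₂_congr fun l hl => by rw [update_of_ne hl]

theorem card_edge (G : Finset (Fin m → Fin p)) (j : Fin m) (g : Fin m → Fin p) :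
    #(edge G j g) = #{b | update g j b ∈ G} := by
  rw [← card_image_of_injective _ (update_injective g j)]
  congr 1
  ext h
  simp only [edge, mem_filter, mem_image, mem_univ, true_and]
  constructor
  · rintro ⟨hG, hh⟩
    have hg : update g j (h j) = h := update_eq_iff.mpr ⟨rfl, fun l hl => (hh l hl).symm⟩
    exact ⟨h j, by rwa [hg], hg⟩
  · rintro ⟨b, hb, rfl⟩
    exact ⟨hb, fun l hl => update_of_ne hl b g⟩

theorem card_edge_le (G : Finset (Fin m → Fin p)) (j : Fin m) (g : Fin m → Fin p) :
    #(edge G j g) ≤ p :=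
  card_edge G j g ▸ (card_le_univ _).trans (Fintype.card_fin p).le

theorem card_edge_shift_self (i : Fin m) (H : Finset (Fin m → Fin p)) (v : Fin m → Fin p) :
    #(edge (shift i H) i v) = #(edge H i v) := by
  rw [card_edge (shift i H)]
  simp only [mem_shift, update_self, edge_update]
  rw [Fin.card_filter_val_lt, min_eq_right (card_edge_le H i v)]

theorem sum_min_card_edge_shift_update_le {i j : Fin m} (hij : i ≠ j)
    (H : Finset (Fin m → Fin p)) (w : Fin m → Fin p) (k : ℕ) :
    ∑ a, min #(edge (shift i H) j (update w i a)) k ≤ ∑ a, min #(edge H j (update w i a)) k := by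
  set R : Fin p → Finset (Fin p) := fun a => {b | update (update w i a) j b ∈ H}
  have hcol : ∀ a b, #(edge H i (update (update w i a) j b)) = #{a' | b ∈ R a'} := fun a b => by
    simp only [R, card_edge, mem_filter, mem_univ, true_and, update_comm hij.symm, update_idem]
  have hrow : ∀ a, #(edge (shift i H) j (update w i a)) = #{b | (a : ℕ) < #{a' | b ∈ R a'}} :=
    fun a => by simp only [card_edge, mem_shift, update_of_ne hij, update_self, hcol]
  simpa only [hrow, card_edge] using sum_min_card_compress_le R k

variable [NeZero p]

theorem edge_eq_filter_update (G : Finset (Fin m → Fin p)) (j : Fin m) (g : Fin m → Fin p) :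
    edge G j g = {h ∈ G | update h j 0 = update g j 0} :=
  filter_congr fun h _ => by
    simp only [update_eq_iff, update_self, true_and]
    exact forall₂_congr fun l hl => by rw [update_of_ne hl]

theorem edge_eq_filter_update_eq (G : Finset (Fin m → Fin p)) {j : Fin m} {v : Fin m → Fin p}
    (hv : v j = 0) : edge G j v = {h ∈ G | update h j 0 = v} := by
  rw [edge_eq_filter_update, update_eq_self_iff.mpr hv.symm]

theorem sum_image_edge {γ : Type*} [AddCommMonoid γ] (G : Finset (Fin m → Fin p)) (j : Fin m)
    {φ : Finset (Fin m → Fin p) → γ} (hφ : φ ∅ = 0) :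
    ∑ e ∈ G.image (edge G j), φ e = ∑ v with v j = 0, φ (edge G j v) := by
  conv_lhs => rw [funext (edge_eq_filter_update G j), sum_image_filter_eq_sum_image]
  refine (sum_subset (fun v hv => ?_) fun v hv hvG => ?_).trans
    (sum_congr rfl fun v hv => by rw [edge_eq_filter_update_eq G (mem_filter.mp hv).2])
  · obtain ⟨h, -, rfl⟩ := mem_image.mp hv
    simp
  · rw [filter_eq_empty_iff.mpr fun h hh hhv => hvG (mem_image.mpr ⟨h, hh, hhv⟩), hφ]

theorem card_eq_sum_card_edge (G : Finset (Fin m → Fin p)) (j : Fin m) :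
    #G = ∑ v with v j = 0, #(edge G j v) := by
  rw [card_eq_sum_card_fiberwise (f := fun h => update h j 0) (t := {v | v j = 0})
    (fun h _ => by simp)]
  exact sum_congr rfl fun v hv => by rw [edge_eq_filter_update_eq G (mem_filter.mp hv).2]

theorem sum_image_edge_card_tsub (G : Finset (Fin m → Fin p)) (j : Fin m) (k : ℕ) :
    ∑ e ∈ G.image (edge G j), (#e - k) = #G - ∑ v with v j = 0, min #(edge G j v) k := by
  rw [sum_image_edge G j (φ := fun e => #e - k) (by simp), card_eq_sum_card_edge G j,
    ← sum_tsub_distrib _ fun v _ => min_le_left _ k]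
  exact sum_congr rfl fun v _ => by omega

theorem card_shift (i : Fin m) (H : Finset (Fin m → Fin p)) : #(shift i H) = #H := by
  rw [card_eq_sum_card_edge (shift i H) i, card_eq_sum_card_edge H i]
  simp only [card_edge_shift_self]

theorem sum_apply_eq_zero_eq_sum_sum_update {M : Type*} [AddCommMonoid M] {i j : Fin m}
    (hij : i ≠ j) (F : (Fin m → Fin p) → M) :
    ∑ v with v j = 0, F v = ∑ w with w i = 0 ∧ w j = 0, ∑ a, F (update w i a) := by
  rw [← sum_fiberwise_of_maps_to (g := fun v => update v i 0) (t := {w | w i = 0 ∧ w j = 0})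
    (fun v hv => by simpa [update_of_ne hij.symm] using hv)]
  refine sum_congr rfl fun w hw => ?_
  obtain ⟨hwi, hwj⟩ := (mem_filter.mp hw).2
  have hline : ({v | v j = 0} : Finset _).filter (fun v => update v i 0 = w) =
      univ.image (update w i) := by
    ext v
    simp only [mem_filter, mem_univ, true_and, mem_image]
    constructor
    · rintro ⟨-, rfl⟩
      exact ⟨v i, by simp⟩
    · rintro ⟨a, rfl⟩
      simp [update_of_ne hij.symm, hwj, hwi]
  rw [hline, sum_image fun a _ b _ hab => update_injective w i hab]

theorem sum_min_card_edge_shift_le (i j : Fin m) (H : Finset (Fin m → Fin p)) (k : ℕ) :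
    ∑ v with v j = 0, min #(edge (shift i H) j v) k ≤ ∑ v with v j = 0, min #(edge H j v) k := by
  obtain rfl | hij := eq_or_ne i j
  · simp only [card_edge_shift_self, le_refl]
  · simp only [sum_apply_eq_zero_eq_sum_sum_update hij]
    exact sum_le_sum fun w _ => sum_min_card_edge_shift_update_le hij H w k

end OneInclusion

/-- The shifting average `k`-degree `savd(G) = (1/|G|) ∑_{e} max(|e| - k, 0)`
(the sum ranging over the edges of the one-inclusion graph of `G`) does not
decrease under shifting. -/
theorem stmt11 {m p k : ℕ} (H : Finset (Fin m → Fin p)) (hH : H.Nonempty)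
    (i : Fin m) :
    ((∑ j : Fin m, ∑ e ∈ H.image fun h => edge H j h, (e.card - k) : ℕ) : ℝ)
        / H.card
      ≤ ((∑ j : Fin m, ∑ e ∈ (shift i H).image fun h => edge (shift i H) j h,
            (e.card - k) : ℕ) : ℝ) / (shift i H).card := by
  obtain ⟨h, -⟩ := hH
  have : NeZero p := NeZero.of_pos (h i).pos
  rw [card_shift]
  refine div_le_div_of_nonneg_right (Nat.cast_le.mpr (sum_le_sum fun j _ => ?_)) (Nat.cast_nonneg _)
  rw [sum_image_edge_card_tsub, sum_image_edge_card_tsub, card_shift]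
  exact Nat.sub_le_sub_left (sum_min_card_edge_shift_le i j H k) _
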